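/- Let C ⊆ F_2^n be a code such that |I(c)| ≥ 3 for every codeword c ∈ C and I(x) ≠ ∅ for every vertex x. Then C is a local identifying code. -/

import Mathlib

open SimpleGraph

/-- The closed neighbourhood of a vertex. -/
def cnbr {V : Type*} (G : SimpleGraph V) (u : V) : Set V := insert u (G.neighborSet u)

/-- The `I`-set of a vertex with respect to a code `C`. -/
def iset {V : Type*} (G : SimpleGraph V) (C : Set V) (u : V) : Set V := cnbr G u ∩ C

/-- `C` is a dominating set (covering code). -/
def IsDominating {V : Type*} (G : SimpleGraph V) (C : Set V) : Prop :=
  ∀ u, (iset G C u).Nonempty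

/-- `C` is a local identifying code. -/
def IsLocalID {V : Type*} (G : SimpleGraph V) (C : Set V) : Prop :=
  IsDominating G C ∧ ∀ u v, G.Adj u v → iset G C u ≠ iset G C v

/-- `C` is a local locating-dominating code. -/
def IsLocalLD {V : Type*} (G : SimpleGraph V) (C : Set V) : Prop :=
  IsDominating G C ∧ ∀ u v, G.Adj u v → u ∉ C → v ∉ C → iset G C u ≠ iset G C v

/-- `C` is an identifying code. -/
def IsID {V : Type*} (G : SimpleGraph V) (C : Set V) : Prop :=
  IsDominating G C ∧ ∀ u v : V, u ≠ v → iset G C u ≠ iset G C v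

/-- `C` is a locating-dominating code. -/
def IsLD {V : Type*} (G : SimpleGraph V) (C : Set V) : Prop :=
  IsDominating G C ∧ ∀ u v : V, u ≠ v → u ∉ C → v ∉ C → iset G C u ≠ iset G C v

/-- The share of a codeword `c`. -/
noncomputable def share {V : Type*} (G : SimpleGraph V) (C : Set V) (c : V) : ℝ :=
  ∑ᶠ u ∈ cnbr G c, (1 : ℝ) / (iset G C u).ncard

/-- The binary `n`-dimensional hypercube. -/
def cube (n : ℕ) : SimpleGraph (Fin n → ZMod 2) where
  Adj x y := hammingDist x y = 1
  symm := ⟨fun x y h => by change hammingDist x y = 1 at h; change hammingDist y x = 1; rwa [hammingDist_comm]⟩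
  loopless := ⟨fun x h => by change hammingDist x x = 1 at h; rw [hammingDist_self] at h; exact absurd h (by norm_num)⟩


/-! If adjacent `u`, `v` had `I(u) = I(v)`, then `I(u) ⊆ N[u] ∩ N[v] = {u, v}`, because the
hypercube is bipartite (colour a vertex by its coordinate sum mod 2) and hence triangle-free.
A codeword `c ∈ I(u)` is then `u` or `v`, so `I(c) = I(u)` has at most two elements. -/

lemma sum_zmod_two_eq_hammingNorm {ι : Type*} [Fintype ι] (x : ι → ZMod 2) :
    ∑ i, x i = (hammingNorm x : ZMod 2) := by
  rw [hammingNorm, Finset.natCast_card_filter]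
  refine Finset.sum_congr rfl fun i _ => ?_
  generalize x i = a
  revert a
  decide

lemma cube_colorable_two (n : ℕ) : (cube n).Colorable 2 := by
  refine (Coloring.mk (fun x => ∑ i, x i) fun {x y} hxy heq => ?_ :
    (cube n).Coloring (ZMod 2)).colorable
  have hsum : ∑ i, (-x + y) i = 0 := by
    simp only [Pi.add_apply, Pi.neg_apply, Finset.sum_add_distrib, Finset.sum_neg_distrib, heq,
      neg_add_cancel]
  rw [sum_zmod_two_eq_hammingNorm, ← hammingDist_eq_hammingNorm, hxy] at hsum
  exact one_ne_zero hsum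

section
variable {V : Type*} {G : SimpleGraph V}

lemma cnbr_inter_cnbr_subset_of_cliqueFree (hG : G.CliqueFree 3) {u v : V} (huv : G.Adj u v) :
    cnbr G u ∩ cnbr G v ⊆ {u, v} := by
  rintro w ⟨rfl | hwu, rfl | hwv⟩
  all_goals try simp
  by_contra! hw
  exact isIndepSet_neighborSet_of_triangleFree G hG v huv.symm hwv (Ne.symm hw.1) hwu

theorem isLocalID_of_cliqueFree_of_three_le_ncard_iset (hG : G.CliqueFree 3) {C : Set V}
    (h3 : ∀ c ∈ C, 3 ≤ (iset G C c).ncard) (hdom : IsDominating G C) : IsLocalID G C := by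
  refine ⟨hdom, fun u v huv heq => ?_⟩
  have hsub : iset G C u ⊆ {u, v} := fun w hw =>
    cnbr_inter_cnbr_subset_of_cliqueFree hG huv ⟨hw.1, (heq ▸ hw : w ∈ iset G C v).1⟩
  obtain ⟨c, hc⟩ := hdom u
  have hcu : iset G C c = iset G C u := by
    rcases hsub hc with rfl | rfl
    exacts [rfl, heq.symm]
  have hle : (iset G C c).ncard ≤ 2 := calc
    (iset G C c).ncard ≤ ({u, v} : Set V).ncard :=
      hcu ▸ Set.ncard_le_ncard hsub (Set.toFinite _)
    _ ≤ ({v} : Set V).ncard + 1 := Set.ncard_insert_le u {v}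
    _ = 2 := by rw [Set.ncard_singleton]
  exact absurd (h3 c hc.2) (by omega)

end

/-- If `|I(c)| ≥ 3` for every codeword and `I(x) ≠ ∅` for every vertex, then `C` is a
local identifying code in `F_2^n`. -/
theorem stmt11 (n : ℕ) (C : Set (Fin n → ZMod 2))
    (h3 : ∀ c ∈ C, 3 ≤ (iset (cube n) C c).ncard)
    (hdom : ∀ x, (iset (cube n) C x).Nonempty) :
    IsLocalID (cube n) C :=
  isLocalID_of_cliqueFree_of_three_le_ncard_iset ((cube_colorable_two n).cliqueFree (by norm_num))
    h3 hdom
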